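/- In the q-shuffle algebra V on letters x, y, for every natural number n, x ⋆ (xyy(xxyy)^n x) − (xyy(xxyy)^n x) ⋆ x = (q^2 − q^{-2})·((xxyy)^{n+1} x − x(yyxx)^{n+1}), where all words are concatenation words. -/
import Mathlib


noncomputable section

/-- The letter `x`. -/
def bX : Bool := false
/-- The letter `y`. -/
def bY : Bool := true

/-- The bilinear pairing on letters: `⟨x,x⟩ = ⟨y,y⟩ = 2`, `⟨x,y⟩ = ⟨y,x⟩ = -2`. -/
def qbr (a b : Bool) : ℤ := if a = b then 2 else -2

/-- The sum `⟨a, w₁⟩ + ⋯ + ⟨a, wₙ⟩` for a letter `a` and a word `w`. -/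
def qE (a : Bool) (w : List Bool) : ℤ := (w.map (qbr a)).sum

/-- Linear map on the free algebra (words-indexed finsupps) given by prepending a letter. -/
def qcons (F : Type*) [Field F] (a : Bool) :
    (List Bool →₀ F) →ₗ[F] (List Bool →₀ F) :=
  Finsupp.lmapDomain F F (List.cons a)

/-- The q-shuffle product of two words, as an element of the free algebra `List Bool →₀ F`.
Defined by the recursion `u ⋆ v = u₁((u₂⋯u_r) ⋆ v) + q^{⟨v₁,u₁⟩+⋯+⟨v₁,u_r⟩} v₁(u ⋆ (v₂⋯v_s))`. -/
def qsh {F : Type*} [Field F] (q : F) : List Bool → List Bool → (List Bool →₀ F)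
  | [], v => Finsupp.single v 1
  | a :: u, [] => Finsupp.single (a :: u) 1
  | a :: u, b :: v =>
      qcons F a (qsh q u (b :: v)) +
        (q ^ (qbr b a + qE b u)) • qcons F b (qsh q (a :: u) v)
  termination_by u v => u.length + v.length
  decreasing_by all_goals (simp only [List.length_cons]; omega)

/-- Concatenation power of a word. -/
def wpow (w : List Bool) : ℕ → List Bool
  | 0 => []
  | n + 1 => w ++ wpow w n

def wXXYY : List Bool := [bX, bX, bY, bY]
def wYYXX : List Bool := [bY, bY, bX, bX]
def wXY : List Bool := [bX, bY]
def wYX : List Bool := [bY, bX]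
-- auxiliary lemmas
lemma qsh_nil_left' {F : Type*} [Field F] (q : F) (v : List Bool) :
    qsh q [] v = Finsupp.single v 1 := by rw [qsh]

lemma qsh_nil_right' {F : Type*} [Field F] (q : F) (a : Bool) (u : List Bool) :
    qsh q (a :: u) [] = Finsupp.single (a :: u) 1 := by rw [qsh]

lemma qsh_cons_cons {F : Type*} [Field F] (q : F) (a b : Bool) (u v : List Bool) :
    qsh q (a :: u) (b :: v) = qcons F a (qsh q u (b :: v)) +
      (q ^ (qbr b a + qE b u)) • qcons F b (qsh q (a :: u) v) := by rw [qsh]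

lemma qcons_single {F : Type*} [Field F] (a : Bool) (w : List Bool) (c : F) :
    qcons F a (Finsupp.single w c) = Finsupp.single (a :: w) c := by
  simp [qcons, Finsupp.lmapDomain_apply, Finsupp.mapDomain_single]

lemma qbr_comm' (a b : Bool) : qbr a b = qbr b a := by
  rcases a <;> rcases b <;> simp [qbr]

lemma qE_nil' (a : Bool) : qE a [] = 0 := rfl

lemma qE_cons' (a b : Bool) (w : List Bool) : qE a (b :: w) = qbr a b + qE a w := by
  simp [qE]

lemma qE_append' (a : Bool) (u v : List Bool) : qE a (u ++ v) = qE a u + qE a v := by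
  simp [qE]

lemma qsh_single_left {F : Type*} [Field F] (q : F) (hq : q ≠ 0) (a : Bool) (w : List Bool) :
    qsh q [a] w = ∑ i ∈ Finset.range (w.length + 1),
      q ^ (qE a (w.take i)) • Finsupp.single (w.take i ++ a :: w.drop i) (1 : F) := by
  induction w with
  | nil => simp [qsh_nil_right', qE_nil']
  | cons b v ih =>
      rw [qsh_cons_cons, qsh_nil_left', qcons_single, ih, map_sum, List.length_cons,
        Finset.sum_range_succ' (fun i => q ^ (qE a ((b :: v).take i)) •
          Finsupp.single ((b :: v).take i ++ a :: (b :: v).drop i) (1 : F)) (v.length + 1)]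
      simp only [List.take_zero, List.drop_zero, List.nil_append,
        qE_nil', zpow_zero, one_smul, List.take_succ_cons, List.drop_succ_cons,
        map_smul, qcons_single, qE_cons']
      rw [add_comm]
      congr 1
      rw [Finset.smul_sum]
      refine Finset.sum_congr rfl fun i _ => ?_
      rw [smul_smul, ← zpow_add₀ hq, qbr_comm' b a, List.cons_append]
      norm_num

lemma qsh_single_right {F : Type*} [Field F] (q : F) (a : Bool) (w : List Bool) :
    qsh q w [a] = ∑ i ∈ Finset.range (w.length + 1),
      q ^ (qE a (w.drop i)) • Finsupp.single (w.take i ++ a :: w.drop i) (1 : F) := by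
  induction w with
  | nil => simp [qsh_nil_left', qE_nil']
  | cons b v ih =>
      rw [qsh_cons_cons, qsh_nil_right', qcons_single, ih, map_sum, List.length_cons,
        Finset.sum_range_succ' (fun i => q ^ (qE a ((b :: v).drop i)) •
          Finsupp.single ((b :: v).take i ++ a :: (b :: v).drop i) (1 : F)) (v.length + 1)]
      simp only [List.take_zero, List.drop_zero, List.nil_append,
        List.take_succ_cons, List.drop_succ_cons, map_smul, qcons_single, qE_cons']
      congr 1
lemma wpow_succ'' (w : List Bool) (n : ℕ) : wpow w (n + 1) = wpow w n ++ w := by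
  induction n with
  | zero => simp [wpow]
  | succ n ih =>
      show w ++ wpow w (n + 1) = wpow w (n + 1) ++ w
      conv_lhs => rw [ih]
      rw [← List.append_assoc]
      rfl

lemma wpow_len (w : List Bool) (n : ℕ) : (wpow w n).length = n * w.length := by
  induction n with
  | zero => simp [wpow]
  | succ n ih => simp [wpow, ih]; ring

lemma qE_wpow (a : Bool) (u : List Bool) (h : qE a u = 0) (m : ℕ) :
    qE a (wpow u m) = 0 := by
  induction m with
  | zero => rfl
  | succ m ih => show qE a (u ++ wpow u m) = 0; rw [qE_append', h, ih]; ring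

lemma qE_XXYY : qE bX wXXYY = 0 := by norm_num [qE, wXXYY, qbr, bX, bY]
lemma qE_YYXX : qE bX wYYXX = 0 := by norm_num [qE, wYYXX, qbr, bX, bY]

lemma yy_shift (m k : ℕ) : bY :: bY :: wpow wXXYY (k + m)
    = wpow wYYXX k ++ (bY :: bY :: wpow wXXYY m) := by
  induction k with
  | zero => simp [wpow]
  | succ k ih =>
      rw [show k + 1 + m = (k + m) + 1 from by omega,
        show wpow wXXYY ((k+m)+1) = wXXYY ++ wpow wXXYY (k+m) from rfl,
        show wpow wYYXX (k+1) = wYYXX ++ wpow wYYXX k from rfl,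
        List.append_assoc, ← ih]
      simp [wXXYY, wYYXX]

lemma split_w (n k : ℕ) (h : k ≤ n) :
    ([bX, bY, bY] ++ wpow wXXYY n ++ [bX] : List Bool) =
      (bX :: wpow wYYXX k) ++ (bY :: bY :: (wpow wXXYY (n - k) ++ [bX])) := by
  have h2 := yy_shift (n - k) k
  rw [show k + (n - k) = n from by omega] at h2
  have h3 := congrArg (fun l => bX :: (l ++ [bX])) h2
  simpa only [List.cons_append, List.nil_append, List.append_assoc] using h3

lemma take_len_add {α : Type*} (l₁ l₂ : List α) (j : ℕ) :
    (l₁ ++ l₂).take (l₁.length + j) = l₁ ++ l₂.take j := by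
  induction l₁ with
  | nil => simp
  | cons a l ih =>
      simp only [List.cons_append, List.length_cons]
      rw [show l.length + 1 + j = (l.length + j) + 1 from by omega,
        List.take_succ_cons, ih]

lemma drop_len_add {α : Type*} (l₁ l₂ : List α) (j : ℕ) :
    (l₁ ++ l₂).drop (l₁.length + j) = l₂.drop j := by
  induction l₁ with
  | nil => simp
  | cons a l ih =>
      simp only [List.cons_append, List.length_cons]
      rw [show l.length + 1 + j = (l.length + j) + 1 from by omega,
        List.drop_succ_cons, ih]

lemma sum_four {M : Type*} [AddCommMonoid M] (f : ℕ → M) (m : ℕ) :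
    ∑ i ∈ Finset.range (4 * m), f i
      = ∑ k ∈ Finset.range m, (f (4*k) + f (4*k+1) + f (4*k+2) + f (4*k+3)) := by
  induction m with
  | zero => simp
  | succ m ih =>
      rw [Finset.sum_range_succ, ← ih, show 4*(m+1) = (4*m+3)+1 from by ring,
        Finset.sum_range_succ, show 4*m+3 = (4*m+2)+1 from rfl, Finset.sum_range_succ,
        show 4*m+2 = (4*m+1)+1 from rfl, Finset.sum_range_succ,
        show 4*m+1 = (4*m)+1 from rfl, Finset.sum_range_succ]
      abel

lemma qbr_XX : qbr bX bX = 2 := by norm_num [qbr]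
lemma qbr_XY : qbr bX bY = -2 := by norm_num [qbr, bX, bY]

lemma telescope {M : Type*} [AddCommGroup M] (g v : ℕ → M) (n : ℕ)
    (h : ∀ k, k < n → v k = g (k + 1)) :
    ∑ k ∈ Finset.range (n + 1), (g k - v k) = g 0 - v n := by
  rw [Finset.sum_sub_distrib, Finset.sum_range_succ v,
    Finset.sum_congr rfl (fun k hk => h k (Finset.mem_range.mp hk)),
    Finset.sum_range_succ' g]
  abel
/-- `[x, xyy(xxyy)^n x] = (q² − q^{-2})((xxyy)^{n+1} x − x(yyxx)^{n+1})` in the q-shuffle algebra. -/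
theorem stmt6 {F : Type*} [Field F] [CharZero F] (q : F) (hq : q ≠ 0)
    (hq1 : ∀ m : ℕ, 0 < m → q ^ m ≠ 1) (n : ℕ) :
    qsh q [bX] ([bX, bY, bY] ++ wpow wXXYY n ++ [bX])
        - qsh q ([bX, bY, bY] ++ wpow wXXYY n ++ [bX]) [bX]
      = (q ^ (2 : ℤ) - q ^ (-2 : ℤ)) •
          (Finsupp.single (wpow wXXYY (n + 1) ++ [bX]) (1 : F)
            - Finsupp.single ([bX] ++ wpow wYYXX (n + 1)) (1 : F)) := by
  have hlen : ([bX, bY, bY] ++ wpow wXXYY n ++ [bX] : List Bool).length = 4*(n+1) := by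
    simp [wpow_len, wXXYY]; omega
  have h0 : qE bX (wpow wXXYY n) = 0 := qE_wpow _ _ qE_XXYY n
  have hqEw : qE bX ([bX, bY, bY] ++ wpow wXXYY n ++ [bX]) = 0 := by
    simp only [qE_append', qE_cons', qE_nil', h0, qbr]
    norm_num [bX, bY]
  rw [qsh_single_left q hq, qsh_single_right q, hlen, ← Finset.sum_sub_distrib,
    Finset.sum_range_succ', sum_four]
  simp only [List.take_zero, List.drop_zero, List.nil_append, qE_nil', hqEw,
    zpow_zero, sub_self, add_zero]
  trans ∑ k ∈ Finset.range (n+1), (q ^ (2:ℤ) - q ^ (-2:ℤ)) •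
      (Finsupp.single ((bX :: wpow wYYXX k) ++ bX :: bY :: bY :: (wpow wXXYY (n-k) ++ [bX])) (1:F)
        - Finsupp.single ((bX :: wpow wYYXX k) ++ bY :: bY :: bX :: (wpow wXXYY (n-k) ++ [bX])) (1:F))
  · refine Finset.sum_congr rfl fun k hk => ?_
    have hk' : k ≤ n := Nat.lt_succ_iff.mp (Finset.mem_range.mp hk)
    have hPl : (bX :: wpow wYYXX k : List Bool).length = 4*k+1 := by
      simp [wpow_len, wYYXX]; omega
    have e2 : qE bX (wpow wYYXX k) = 0 := qE_wpow _ _ qE_YYXX k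
    rw [split_w n k hk',
      show (4*k+3+1 : ℕ) = (bX :: wpow wYYXX k : List Bool).length + 3 from by rw [hPl],
      show (4*k+2+1 : ℕ) = (bX :: wpow wYYXX k : List Bool).length + 2 from by rw [hPl],
      show (4*k+1+1 : ℕ) = (bX :: wpow wYYXX k : List Bool).length + 1 from by rw [hPl],
      show (4*k+1 : ℕ) = (bX :: wpow wYYXX k : List Bool).length from hPl.symm,
      take_len_add, take_len_add, take_len_add, drop_len_add, drop_len_add, drop_len_add,
      List.take_left, List.drop_left]
    have e1 := qE_wpow bX wXXYY qE_XXYY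
    rcases hm : n - k with _ | m
    · simp only [wpow, List.nil_append, List.take_succ_cons, List.take_zero, List.take_nil,
        List.drop_succ_cons, List.drop_zero, List.drop_nil]
      simp only [List.append_assoc, List.cons_append, List.nil_append, qE_append', qE_cons',
        qE_nil', e1, e2, qbr_XX, qbr_XY, add_zero, zero_add]
      norm_num [smul_sub, sub_smul, Finsupp.smul_single, smul_smul, mul_one]
      abel
    · simp only [show wpow wXXYY (m+1) = [bX, bX, bY, bY] ++ wpow wXXYY m from rfl,
        List.cons_append, List.nil_append, List.take_succ_cons, List.take_zero,
        List.drop_succ_cons, List.drop_zero]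
      simp only [List.append_assoc, List.cons_append, List.nil_append, qE_append', qE_cons',
        qE_nil', e1, e2, qbr_XX, qbr_XY, add_zero, zero_add]
      norm_num [smul_sub, sub_smul, Finsupp.smul_single, smul_smul, mul_one]
      abel
  · have hVU : ∀ k, k < n →
        (bX :: wpow wYYXX k ++ bY :: bY :: bX :: (wpow wXXYY (n - k) ++ [bX]) : List Bool)
          = bX :: wpow wYYXX (k+1) ++ bX :: bY :: bY :: (wpow wXXYY (n - (k+1)) ++ [bX]) := by
      intro k hk
      rw [show n - k = (n - (k+1)) + 1 from by omega,
        show wpow wXXYY ((n - (k+1)) + 1) = wXXYY ++ wpow wXXYY (n - (k+1)) from rfl,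
        wpow_succ'']
      simp [wXXYY, wYYXX]
    rw [← Finset.smul_sum]
    congr 1
    rw [show (∑ k ∈ Finset.range (n+1),
        ((Finsupp.single (bX :: wpow wYYXX k ++ bX :: bY :: bY :: (wpow wXXYY (n - k) ++ [bX])) (1:F))
          - Finsupp.single (bX :: wpow wYYXX k ++ bY :: bY :: bX :: (wpow wXXYY (n - k) ++ [bX])) (1:F)))
      = (Finsupp.single (bX :: wpow wYYXX 0 ++ bX :: bY :: bY :: (wpow wXXYY (n - 0) ++ [bX])) (1:F))
          - Finsupp.single (bX :: wpow wYYXX n ++ bY :: bY :: bX :: (wpow wXXYY (n - n) ++ [bX])) (1:F)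
      from telescope
        (fun k => Finsupp.single (bX :: wpow wYYXX k ++ bX :: bY :: bY :: (wpow wXXYY (n - k) ++ [bX])) (1:F))
        (fun k => Finsupp.single (bX :: wpow wYYXX k ++ bY :: bY :: bX :: (wpow wXXYY (n - k) ++ [bX])) (1:F))
        n (fun k hk => congrArg (fun l => Finsupp.single l (1:F)) (hVU k hk))]
    have hA : (bX :: wpow wYYXX 0 ++ bX :: bY :: bY :: (wpow wXXYY (n - 0) ++ [bX]) : List Bool)
        = wpow wXXYY (n+1) ++ [bX] := by
      simp [wpow, wXXYY, show wpow wXXYY (n+1) = wXXYY ++ wpow wXXYY n from rfl]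
    have hB : (bX :: wpow wYYXX n ++ bY :: bY :: bX :: (wpow wXXYY (n - n) ++ [bX]) : List Bool)
        = [bX] ++ wpow wYYXX (n+1) := by
      rw [Nat.sub_self, wpow_succ'']
      simp [wYYXX, wpow]
    rw [hA, hB]
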